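/- Let l0,l1 ∈ ℝ, s0,s1 > 0, and for θ ∈ (0,1) let m_θ(x) = (1−θ)·p_{l0,s0}(x) + θ·p_{l1,s1}(x). Define F(θ) = ∫_ℝ m_θ(x)·log m_θ(x) dx and η(θ) = ∫_ℝ (p_{l1,s1}(x) − p_{l0,s0}(x))·log m_θ(x) dx. Then for all θ1, θ2 ∈ (0,1), the Kullback–Leibler divergence between the mixtures equals the Bregman divergence of the negentropy: ∫_ℝ m_{θ1}(x)·log(m_{θ1}(x)/m_{θ2}(x)) dx = F(θ1) − F(θ2) − (θ1 − θ2)·η(θ2). -/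

import Mathlib

open MeasureTheory Real

/-- The Cauchy density with location `l` and scale `s`. -/
noncomputable def cauchyPdf (l s x : ℝ) : ℝ := s / (π * (s ^ 2 + (x - l) ^ 2))

/-- The Cauchy mixture density with components `p_{l0,s0}` and `p_{l1,s1}`. -/
noncomputable def cauchyMix (l0 s0 l1 s1 θ x : ℝ) : ℝ :=
  (1 - θ) * cauchyPdf l0 s0 x + θ * cauchyPdf l1 s1 x

/-!
The cross-entropy `θ ↦ ∫ m_θ log m_{θ₂}` is affine in `θ`, and `η(θ₂)` is its slope, so
`F(θ₂) + (θ₁ - θ₂) η(θ₂) = ∫ m_{θ₁} log m_{θ₂}`; subtracting this from `F(θ₁)` leaves the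
Kullback–Leibler divergence. The analytic content is that every integral involved
converges: a Cauchy density and a Cauchy mixture are both comparable to `(1 + x²)⁻¹`,
so the integrands are `O(log(1 + x²) / (1 + x²))`.
-/

lemma integrable_log_one_add_sq_mul_inv :
    Integrable fun x : ℝ => log (1 + x ^ 2) * (1 + x ^ 2)⁻¹ := by
  have hdom : Integrable fun x : ℝ => 4 * (1 + x ^ 2) ^ (-(3 / 2) / 2 : ℝ) := by
    have := integrable_rpow_neg_one_add_norm_sq (E := ℝ) (μ := volume) (r := 3 / 2)
      (by norm_num [Module.finrank_self])
    simpa [Real.norm_eq_abs, sq_abs] using this.const_mul 4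
  refine hdom.mono' (by fun_prop) (Filter.Eventually.of_forall fun x => ?_)
  have hy : 1 ≤ 1 + x ^ 2 := by nlinarith
  have hy0 : 0 < 1 + x ^ 2 := by positivity
  rw [Real.norm_of_nonneg (by have := log_nonneg hy; positivity)]
  calc log (1 + x ^ 2) * (1 + x ^ 2)⁻¹
      ≤ (1 + x ^ 2) ^ (1 / 4 : ℝ) / (1 / 4) * (1 + x ^ 2)⁻¹ := by
        gcongr
        exact log_le_rpow_div hy0.le (by norm_num)
    _ = 4 * (1 + x ^ 2) ^ (-(3 / 2) / 2 : ℝ) := by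
        rw [← rpow_neg_one, mul_comm, div_eq_mul_inv, ← mul_assoc, ← rpow_add hy0]
        norm_num
        ring

lemma abs_log_le_of_mul_inv_one_add_sq_le {c M y x : ℝ} (hc : 0 < c)
    (hlb : c * (1 + x ^ 2)⁻¹ ≤ y) (hub : y ≤ M) :
    |log y| ≤ |log c| + |log M| + log (1 + x ^ 2) := by
  have hy : 0 < y := lt_of_lt_of_le (by positivity) hlb
  have hlog_lb : log c - log (1 + x ^ 2) ≤ log y := by
    rw [sub_eq_add_neg, ← log_inv, ← log_mul hc.ne' (by positivity)]
    exact log_le_log (by positivity) hlb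
  have hlog_ub : log y ≤ log M := log_le_log hy hub
  have : 0 ≤ log (1 + x ^ 2) := log_nonneg (by nlinarith)
  rw [abs_le]
  constructor <;> linarith [neg_abs_le (log c), le_abs_self (log M), abs_nonneg (log c),
    abs_nonneg (log M)]

lemma integrable_mul_log_of_le_inv_one_add_sq {f g : ℝ → ℝ} {C c M : ℝ}
    (hf : Measurable f) (hg : Measurable g) (hc : 0 < c)
    (hf_le : ∀ x, |f x| ≤ C * (1 + x ^ 2)⁻¹)
    (hg_ge : ∀ x, c * (1 + x ^ 2)⁻¹ ≤ g x) (hg_le : ∀ x, g x ≤ M) :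
    Integrable fun x => f x * log (g x) := by
  set K := |log c| + |log M|
  have hdom : Integrable fun x : ℝ =>
      C * K * (1 + x ^ 2)⁻¹ + C * (log (1 + x ^ 2) * (1 + x ^ 2)⁻¹) :=
    (integrable_inv_one_add_sq.const_mul _).add (integrable_log_one_add_sq_mul_inv.const_mul _)
  refine hdom.mono' (hf.mul hg.log).aestronglyMeasurable
    (Filter.Eventually.of_forall fun x => ?_)
  calc ‖f x * log (g x)‖ = |f x| * |log (g x)| := by rw [norm_mul, norm_eq_abs, norm_eq_abs]
    _ ≤ C * (1 + x ^ 2)⁻¹ * (K + log (1 + x ^ 2)) :=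
        mul_le_mul (hf_le x) (abs_log_le_of_mul_inv_one_add_sq_le hc (hg_ge x) (hg_le x))
          (abs_nonneg _) ((abs_nonneg _).trans (hf_le x))
    _ = _ := by ring

lemma one_sub_mul_add_mul_pos {a b θ : ℝ} (ha : 0 < a) (hb : 0 < b) (hθ : θ ∈ Set.Icc 0 1) :
    0 < (1 - θ) * a + θ * b := by
  simpa only [smul_eq_mul, Set.mem_Ioi] using
    convex_Ioi (0 : ℝ) ha hb (sub_nonneg.2 hθ.2) hθ.1 (by ring)

section Cauchy

variable {l s l0 s0 l1 s1 θ : ℝ}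

lemma cauchyPdf_pos (hs : 0 < s) (x : ℝ) : 0 < cauchyPdf l s x := by
  unfold cauchyPdf
  have := pi_pos
  positivity

lemma measurable_cauchyPdf : Measurable (cauchyPdf l s) := by
  unfold cauchyPdf
  fun_prop

lemma cauchyPdf_le (hs : 0 < s) (x : ℝ) : cauchyPdf l s x ≤ (π * s)⁻¹ := by
  have := pi_pos
  calc cauchyPdf l s x ≤ s / (π * s ^ 2) := by
        unfold cauchyPdf
        gcongr
        nlinarith
    _ = (π * s)⁻¹ := by field_simp

lemma exists_cauchyPdf_le_mul_inv_one_add_sq (hs : 0 < s) :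
    ∃ C, ∀ x, cauchyPdf l s x ≤ C * (1 + x ^ 2)⁻¹ := by
  set a := s ^ 2 / (2 * (1 + s ^ 2 + 2 * l ^ 2))
  have := pi_pos
  refine ⟨s / (π * a), fun x => ?_⟩
  have hquad : a * (1 + x ^ 2) ≤ s ^ 2 + (x - l) ^ 2 := by
    rw [div_mul_eq_mul_div, div_le_iff₀ (by positivity)]
    nlinarith [sq_nonneg (s * (x - 2 * l)), sq_nonneg (x - l), sq_nonneg (s * l),
      sq_nonneg (s * (x - l)), sq_nonneg (l * (x - l))]
  calc cauchyPdf l s x ≤ s / (π * (a * (1 + x ^ 2))) := by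
        unfold cauchyPdf
        gcongr
    _ = s / (π * a) * (1 + x ^ 2)⁻¹ := by field_simp

lemma exists_pos_mul_inv_one_add_sq_le_cauchyPdf (hs : 0 < s) :
    ∃ c > 0, ∀ x, c * (1 + x ^ 2)⁻¹ ≤ cauchyPdf l s x := by
  set b := 2 + s ^ 2 + 2 * l ^ 2
  have := pi_pos
  refine ⟨s / (π * b), by positivity, fun x => ?_⟩
  have hquad : s ^ 2 + (x - l) ^ 2 ≤ b * (1 + x ^ 2) := by
    nlinarith [sq_nonneg (x + l), sq_nonneg (s * x), sq_nonneg (l * x)]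
  calc s / (π * b) * (1 + x ^ 2)⁻¹ = s / (π * (b * (1 + x ^ 2))) := by field_simp
    _ ≤ cauchyPdf l s x := by
        unfold cauchyPdf
        gcongr

lemma cauchyMix_pos (hs0 : 0 < s0) (hs1 : 0 < s1) (hθ : θ ∈ Set.Icc 0 1) (x : ℝ) :
    0 < cauchyMix l0 s0 l1 s1 θ x :=
  one_sub_mul_add_mul_pos (cauchyPdf_pos hs0 x) (cauchyPdf_pos hs1 x) hθ

lemma measurable_cauchyMix : Measurable (cauchyMix l0 s0 l1 s1 θ) := by
  unfold cauchyMix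
  exact (measurable_cauchyPdf.const_mul _).add (measurable_cauchyPdf.const_mul _)

lemma cauchyMix_le (hs0 : 0 < s0) (hs1 : 0 < s1) (hθ : θ ∈ Set.Icc 0 1) (x : ℝ) :
    cauchyMix l0 s0 l1 s1 θ x ≤ (π * s0)⁻¹ + (π * s1)⁻¹ := by
  have := cauchyPdf_le (l := l0) hs0 x
  have := cauchyPdf_le (l := l1) hs1 x
  have := cauchyPdf_pos (l := l0) hs0 x
  have := cauchyPdf_pos (l := l1) hs1 x
  unfold cauchyMix
  nlinarith [hθ.1, hθ.2]

lemma exists_pos_mul_inv_one_add_sq_le_cauchyMix (hs0 : 0 < s0) (hs1 : 0 < s1)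
    (hθ : θ ∈ Set.Icc 0 1) :
    ∃ c > 0, ∀ x, c * (1 + x ^ 2)⁻¹ ≤ cauchyMix l0 s0 l1 s1 θ x := by
  obtain ⟨c0, hc0, h0⟩ := exists_pos_mul_inv_one_add_sq_le_cauchyPdf (l := l0) hs0
  obtain ⟨c1, hc1, h1⟩ := exists_pos_mul_inv_one_add_sq_le_cauchyPdf (l := l1) hs1
  refine ⟨(1 - θ) * c0 + θ * c1, one_sub_mul_add_mul_pos hc0 hc1 hθ, fun x => ?_⟩
  unfold cauchyMix
  nlinarith [mul_le_mul_of_nonneg_left (h0 x) (sub_nonneg.2 hθ.2),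
    mul_le_mul_of_nonneg_left (h1 x) hθ.1]

lemma integrable_cauchyPdf_mul_log_cauchyMix (hs : 0 < s) (hs0 : 0 < s0) (hs1 : 0 < s1)
    (hθ : θ ∈ Set.Icc 0 1) :
    Integrable fun x => cauchyPdf l s x * log (cauchyMix l0 s0 l1 s1 θ x) := by
  obtain ⟨C, hC⟩ := exists_cauchyPdf_le_mul_inv_one_add_sq (l := l) hs
  obtain ⟨c, hc, hmix⟩ :=
    exists_pos_mul_inv_one_add_sq_le_cauchyMix (l0 := l0) (l1 := l1) hs0 hs1 hθ
  refine integrable_mul_log_of_le_inv_one_add_sq (C := C) measurable_cauchyPdf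
    measurable_cauchyMix hc (fun x => ?_) hmix (cauchyMix_le hs0 hs1 hθ)
  rw [abs_of_pos (cauchyPdf_pos hs x)]
  exact hC x

variable {h : ℝ → ℝ}

lemma integrable_cauchyMix_mul (h0 : Integrable fun x => cauchyPdf l0 s0 x * h x)
    (h1 : Integrable fun x => cauchyPdf l1 s1 x * h x) (θ : ℝ) :
    Integrable fun x => cauchyMix l0 s0 l1 s1 θ x * h x := by
  refine ((h0.const_mul (1 - θ)).add (h1.const_mul θ)).congr
    (Filter.Eventually.of_forall fun x => ?_)
  simp only [cauchyMix, Pi.add_apply]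
  ring

lemma integral_cauchyMix_mul (h0 : Integrable fun x => cauchyPdf l0 s0 x * h x)
    (h1 : Integrable fun x => cauchyPdf l1 s1 x * h x) (θ : ℝ) :
    ∫ x, cauchyMix l0 s0 l1 s1 θ x * h x =
      (1 - θ) * (∫ x, cauchyPdf l0 s0 x * h x) + θ * ∫ x, cauchyPdf l1 s1 x * h x := by
  rw [← integral_const_mul, ← integral_const_mul, ← integral_add (h0.const_mul _)
    (h1.const_mul _)]
  congr 1 with x
  simp only [cauchyMix]
  ring

end Cauchy

/-- The Kullback–Leibler divergence between two Cauchy mixtures equals the Bregman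
divergence of the negentropy generator. -/
theorem kl_eq_bregman (l0 l1 s0 s1 : ℝ) (hs0 : 0 < s0) (hs1 : 0 < s1)
    (F η : ℝ → ℝ)
    (hF : F = fun θ => ∫ x : ℝ, cauchyMix l0 s0 l1 s1 θ x *
      Real.log (cauchyMix l0 s0 l1 s1 θ x))
    (hη : η = fun θ => ∫ x : ℝ, (cauchyPdf l1 s1 x - cauchyPdf l0 s0 x) *
      Real.log (cauchyMix l0 s0 l1 s1 θ x))
    (θ1 θ2 : ℝ) (hθ1 : θ1 ∈ Set.Ioo (0 : ℝ) 1) (hθ2 : θ2 ∈ Set.Ioo (0 : ℝ) 1) :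
    ∫ x : ℝ, cauchyMix l0 s0 l1 s1 θ1 x *
        Real.log (cauchyMix l0 s0 l1 s1 θ1 x / cauchyMix l0 s0 l1 s1 θ2 x) =
      F θ1 - F θ2 - (θ1 - θ2) * η θ2 := by
  replace hθ1 := Set.Ioo_subset_Icc_self hθ1
  replace hθ2 := Set.Ioo_subset_Icc_self hθ2
  have hint : ∀ θ ∈ Set.Icc (0 : ℝ) 1, ∀ l s, 0 < s →
      Integrable fun x => cauchyPdf l s x * log (cauchyMix l0 s0 l1 s1 θ x) :=
    fun θ hθ l s hs => integrable_cauchyPdf_mul_log_cauchyMix hs hs0 hs1 hθ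
  have hkl (x : ℝ) : cauchyMix l0 s0 l1 s1 θ1 x *
      log (cauchyMix l0 s0 l1 s1 θ1 x / cauchyMix l0 s0 l1 s1 θ2 x) =
        cauchyMix l0 s0 l1 s1 θ1 x * log (cauchyMix l0 s0 l1 s1 θ1 x) -
          cauchyMix l0 s0 l1 s1 θ1 x * log (cauchyMix l0 s0 l1 s1 θ2 x) := by
    rw [log_div (cauchyMix_pos hs0 hs1 hθ1 x).ne' (cauchyMix_pos hs0 hs1 hθ2 x).ne', mul_sub]
  have hη2 : η θ2 = (∫ x, cauchyPdf l1 s1 x * log (cauchyMix l0 s0 l1 s1 θ2 x)) -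
      ∫ x, cauchyPdf l0 s0 x * log (cauchyMix l0 s0 l1 s1 θ2 x) := by
    simp only [hη, sub_mul]
    exact integral_sub (hint θ2 hθ2 l1 s1 hs1) (hint θ2 hθ2 l0 s0 hs0)
  have hcross := integral_cauchyMix_mul (hint θ2 hθ2 l0 s0 hs0) (hint θ2 hθ2 l1 s1 hs1)
  simp only [hkl, hF, hη2]
  rw [integral_sub
      (integrable_cauchyMix_mul (hint θ1 hθ1 l0 s0 hs0) (hint θ1 hθ1 l1 s1 hs1) θ1)
      (integrable_cauchyMix_mul (hint θ2 hθ2 l0 s0 hs0) (hint θ2 hθ2 l1 s1 hs1) θ1),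
    hcross, hcross]
  ring
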